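/- arXiv:1311.0137 — 2 statements merged into one kernel-verified Lean document; each statement's English description precedes it below -/
import Mathlib

section
/- Let G be a plane graph with at least one edge and let M_G be its medial graph. Let x and y be two vertices of G and let f_x and f_y be the faces of M_G corresponding to x and y respectively. Then the wall-by-wall distance between x and y in G equals one more than the minimum distance in M_G between a vertex on the boundary of f_x and a vertex on the boundary of f_y. -/
/-!
Definitions for wall-by-wall distance, λ-flat graphs and ξ-nearly planar graphs,
following Grigoriev, Koutsonas and Thilikos, "Nearly Planar Graphs and λ-flat Graphs".

A plane graph is modelled combinatorially as a simple graph equipped with a rotation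
system (a cyclic order of the edges incident to each vertex) that is planar, i.e.
satisfies Euler's formula (with faces counted as orbits of the face-tracing successor
on darts, corrected for isolated vertices and the number of connected components).

A graph embedding in the sphere (where edges may cross, but only at points that are
not vertices) is modelled topologically by a `Drawing`: an injective placement of the
vertices on the unit sphere of `ℝ³` together with, for each edge, a simple arc joining
the images of its endpoints whose interior avoids all vertices.
-/

namespace WBW

/-- The set of edges of `G` incident to the vertex `v`. -/
def incidentSet {V : Type*} (G : SimpleGraph V) (v : V) : Set (Sym2 V) :=
  {e | e ∈ G.edgeSet ∧ v ∈ e}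

/-- A simple graph together with a rotation system: for every vertex `v`, a
permutation of `Sym2 V` which fixes every non-incident edge and is a single cycle on
the set of edges incident to `v` (the cyclic order `σ_v` of the drawing). -/
structure RotationSystem (V : Type*) where
  G : SimpleGraph V
  rot : V → Equiv.Perm (Sym2 V)
  rot_cycleOn : ∀ v, (rot v).IsCycleOn (incidentSet G v)
  rot_fixed : ∀ v, ∀ e ∉ incidentSet G v, rot v e = e

variable {V : Type*}

/-- The face-tracing successor on darts: the dart `(u,v)` is followed by the dart
leaving `v` along the edge succeeding `s(u,v)` in the cyclic order around `v`. -/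
noncomputable def RotationSystem.faceNext (R : RotationSystem V) (d : R.G.Dart) :
    R.G.Dart :=
  have hmem : d.edge ∈ incidentSet R.G d.toProd.2 :=
    ⟨d.edge_mem, by rcases d with ⟨⟨a, b⟩, h⟩; simp [SimpleGraph.Dart.edge]⟩
  have hmem' : R.rot d.toProd.2 d.edge ∈ incidentSet R.G d.toProd.2 :=
    (R.rot_cycleOn d.toProd.2).1.mapsTo hmem
  ⟨(d.toProd.2, Sym2.Mem.other hmem'.2), by
    have h := Sym2.other_spec hmem'.2
    have h2 : R.rot d.toProd.2 d.edge ∈ R.G.edgeSet := hmem'.1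
    rw [← h] at h2
    exact h2⟩

/-- The number of faces of a rotation system: the number of orbits of the
face-tracing successor on darts. -/
noncomputable def RotationSystem.numFaces (R : RotationSystem V) : ℕ :=
  Nat.card (Quot (fun a b : R.G.Dart => R.faceNext a = b))

/-- A rotation system is plane (it is an embedding of the graph in the sphere without
crossings) iff it satisfies Euler's formula, componentwise; isolated vertices are
accounted for separately, since they carry no dart. -/
def RotationSystem.IsPlane (R : RotationSystem V) : Prop :=
  Nat.card V + R.numFaces + Nat.card {v : V | ∀ w, ¬ R.G.Adj v w} =
    Nat.card R.G.edgeSet + 2 * Nat.card R.G.ConnectedComponent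

/-- Two edges are attached if they share a vertex `v` and appear consecutively in the
cyclic order `σ_v` or its inverse. -/
def Attached (R : RotationSystem V) (e e' : Sym2 V) : Prop :=
  ∃ v : V, e ∈ incidentSet R.G v ∧ e' ∈ incidentSet R.G v ∧
    (R.rot v e = e' ∨ R.rot v e' = e)

/-- A wall-by-wall walk: a nonempty sequence of distinct edges of `R.G` in which
every two consecutive edges are attached. -/
def IsWbwWalk (R : RotationSystem V) (L : List (Sym2 V)) : Prop :=
  L ≠ [] ∧ L.Nodup ∧ (∀ e ∈ L, e ∈ R.G.edgeSet) ∧ L.Chain' (Attached R)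

/-- An `(x,y)`-wall-by-wall walk: a wall-by-wall walk whose first edge is incident to
`x` and whose last edge is incident to `y`. -/
def IsWbwWalkFromTo (R : RotationSystem V) (x y : V) (L : List (Sym2 V)) : Prop :=
  IsWbwWalk R L ∧ (∃ e, L.head? = some e ∧ x ∈ e) ∧ (∃ e, L.getLast? = some e ∧ y ∈ e)

/-- The wall-by-wall distance between `x` and `y`: the least number of edges of an
`(x,y)`-wall-by-wall walk (`⊤` if there is no such walk). -/
noncomputable def wbwDist (R : RotationSystem V) (x y : V) : ℕ∞ :=
  sInf {n : ℕ∞ | ∃ L, IsWbwWalkFromTo R x y L ∧ (L.length : ℕ∞) = n}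

/-- The `λ`-power of a plane graph: keep all edges and make adjacent all pairs of
vertices at wall-by-wall distance at most `λ`. -/
def RotationSystem.power (R : RotationSystem V) (l : ℕ) : SimpleGraph V :=
  R.G ⊔ SimpleGraph.fromRel (fun x y => wbwDist R x y ≤ (l : ℕ∞))

/-- `H` is a subgraph of `G` via the injection `τ`. -/
def SubgraphVia {U V : Type*} (H : SimpleGraph U) (G : SimpleGraph V) (τ : U → V) :
    Prop :=
  Function.Injective τ ∧ ∀ x y, H.Adj x y → G.Adj (τ x) (τ y)

/-- A graph is `λ`-flat if it is a subgraph of the `λ`-power of some plane graph. -/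
def IsFlat (l : ℕ) {V : Type*} (G : SimpleGraph V) : Prop :=
  ∃ (W : Type) (_ : Finite W) (R : RotationSystem W) (τ : V → W),
    R.IsPlane ∧ SubgraphVia G (R.power l) τ

/-- The unit sphere in `ℝ³`. -/
def unitSphere : Set (EuclideanSpace ℝ (Fin 3)) := Metric.sphere 0 1

/-- A drawing (embedding) of a graph in the sphere: vertices are placed injectively,
every edge is drawn as a simple arc joining the images of its two endpoints, and the
interior of every arc avoids all vertex images (so edges may meet, away from their
endpoints, only at points that are not vertices). -/
structure Drawing {V : Type*} (G : SimpleGraph V) where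
  vmap : V → unitSphere
  vmap_inj : Function.Injective vmap
  arc : Sym2 V → C(Set.Icc (0 : ℝ) 1, unitSphere)
  arc_inj : ∀ e ∈ G.edgeSet, Function.Injective (arc e)
  arc_ends : ∀ e ∈ G.edgeSet,
    Sym2.map vmap e =
      s(arc e ⟨0, Set.mem_Icc.mpr (by norm_num)⟩, arc e ⟨1, Set.mem_Icc.mpr (by norm_num)⟩)
  interior_avoids : ∀ e ∈ G.edgeSet, ∀ t : Set.Icc (0 : ℝ) 1,
    (t : ℝ) ≠ 0 → (t : ℝ) ≠ 1 → arc e t ∉ Set.range vmap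

/-- The crossings of the edge `e` in a drawing: pairs consisting of another edge `e'`
and a point, not a vertex, lying on the arcs of both `e` and `e'`. -/
def crossingSet {V : Type*} {G : SimpleGraph V} (D : Drawing G) (e : Sym2 V) :
    Set (Sym2 V × unitSphere) :=
  {q | q.1 ∈ G.edgeSet ∧ q.1 ≠ e ∧ q.2 ∈ Set.range (D.arc e) ∧
    q.2 ∈ Set.range (D.arc q.1) ∧ q.2 ∉ Set.range D.vmap}

/-- A graph is `ξ`-nearly planar if it has a drawing in the sphere in which every
edge is crossed at most `ξ` times. -/
def IsNearlyPlanar (x : ℕ) {V : Type*} (G : SimpleGraph V) : Prop :=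
  ∃ D : Drawing G, ∀ e ∈ G.edgeSet,
    (crossingSet D e).Finite ∧ (crossingSet D e).ncard ≤ x

/-- `λ(G)`: the least `λ` for which `G` is `λ`-flat. -/
noncomputable def flatNum {V : Type*} (G : SimpleGraph V) : ℕ :=
  sInf {l | IsFlat l G}

/-- `ξ(G)`: the least `ξ` for which `G` is `ξ`-nearly planar. -/
noncomputable def nearNum {V : Type*} (G : SimpleGraph V) : ℕ :=
  sInf {x | IsNearlyPlanar x G}

/-- A graph is 3-connected if it has more than 3 vertices and removing any at most 2
vertices leaves it connected. -/
def ThreeConnected {V : Type*} (G : SimpleGraph V) : Prop :=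
  3 < Nat.card V ∧ ∀ s : Set V, s.ncard ≤ 2 → (G.induce sᶜ).Connected

/-- A plane graph is triangulated if every face is bounded by a triangle, i.e. every
orbit of the face-tracing successor has length exactly 3. -/
def RotationSystem.Triangulated (R : RotationSystem V) : Prop :=
  ∀ d : R.G.Dart, R.faceNext (R.faceNext (R.faceNext d)) = d ∧ R.faceNext d ≠ d

/-- `H` is a topological minor of `G`: some subdivision of `H` is a subgraph of `G`,
equivalently the branch vertices embed injectively into `G` and the edges of `H` are
realized by internally disjoint paths of `G` avoiding the branch vertices. -/
def IsTopMinor {U V : Type*} (H : SimpleGraph U) (G : SimpleGraph V) : Prop :=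
  ∃ τ : U → V, Function.Injective τ ∧
    ∃ P : ∀ ⦃x y : U⦄, H.Adj x y → G.Walk (τ x) (τ y),
      (∀ ⦃x y : U⦄ (h : H.Adj x y), (P h).IsPath) ∧
      (∀ ⦃x y : U⦄ (h : H.Adj x y), ∀ v ∈ (P h).support,
        v ∈ Set.range τ → v = τ x ∨ v = τ y) ∧
      (∀ ⦃x y x' y' : U⦄ (h : H.Adj x y) (h' : H.Adj x' y'), s(x, y) ≠ s(x', y') →
        ∀ v, v ∈ (P h).support → v ∈ (P h').support → v ∈ Set.range τ)

/-- `H` is a contraction of `G`: `H` is obtained from `G` by contracting edges,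
equivalently there is a surjection `V(G) → V(H)` with connected fibres such that the
edges of `H` are exactly the pairs of distinct fibres joined by an edge of `G`. -/
def IsContractionOf {U V : Type*} (H : SimpleGraph U) (G : SimpleGraph V) : Prop :=
  ∃ f : V → U, Function.Surjective f ∧
    (∀ u : U, (G.induce (f ⁻¹' {u})).Connected) ∧
    (∀ a b : U, H.Adj a b ↔ a ≠ b ∧ ∃ x y, G.Adj x y ∧ f x = a ∧ f y = b)

/-- The medial graph of a plane graph `G`: its vertices are the edges of `G`, two of
them being adjacent iff they are attached (this is the dual of the radial graph). -/
def medial (R : RotationSystem V) : SimpleGraph {e : Sym2 V // e ∈ R.G.edgeSet} :=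
  SimpleGraph.fromRel (fun e f => Attached R e.1 f.1)

/-- The `(n × n)`-grid graph. -/
def gridGraph (n : ℕ) : SimpleGraph (Fin n × Fin n) :=
  SimpleGraph.fromRel (fun a b =>
    (a.1 = b.1 ∧ (a.2 : ℕ) + 1 = (b.2 : ℕ)) ∨ (a.2 = b.2 ∧ (a.1 : ℕ) + 1 = (b.1 : ℕ)))

/-- The faces of a rotation system: orbits of the face-tracing successor on darts. -/
def RotationSystem.Face (R : RotationSystem V) : Type _ :=
  Quot (fun a b : R.G.Dart => R.faceNext a = b)

/-- The edge `e` lies on the boundary of the face `F`. -/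
def EdgeOnFace (R : RotationSystem V) (e : Sym2 V) (F : R.Face) : Prop :=
  ∃ d : R.G.Dart, Quot.mk _ d = F ∧ d.edge = e

/-- A wall-by-wall walk passes through the face `F` if two consecutive edges of the
walk both lie on the boundary of `F`. -/
def WalkThroughFace (R : RotationSystem V) (L : List (Sym2 V)) (F : R.Face) : Prop :=
  ∃ (l₁ : List (Sym2 V)) (e₁ e₂ : Sym2 V) (l₂ : List (Sym2 V)),
    L = l₁ ++ e₁ :: e₂ :: l₂ ∧ EdgeOnFace R e₁ F ∧ EdgeOnFace R e₂ F

end WBW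

/-!
The edges of `G` are the vertices of `M_G`, and two of them are adjacent exactly when they are
attached. A wall-by-wall walk `e₁, …, e_ℓ` is therefore a walk of length `ℓ - 1` in `M_G`, and
conversely the vertex sequence of a path in `M_G` is a wall-by-wall walk; the edges incident
to `x` are the vertices on the boundary of `f_x`.
-/

namespace WBW

variable {V : Type*} {R : RotationSystem V}

theorem Attached.symm {e f : Sym2 V} (h : Attached R e f) : Attached R f e := by
  obtain ⟨v, he, hf, hrot⟩ := h
  exact ⟨v, hf, he, hrot.symm⟩

theorem medial_adj_iff {e f : {e : Sym2 V // e ∈ R.G.edgeSet}} :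
    (medial R).Adj e f ↔ e ≠ f ∧ Attached R e.1 f.1 := by
  rw [medial, SimpleGraph.fromRel_adj, or_iff_left_of_imp Attached.symm]

theorem IsWbwWalk.of_cons {e : Sym2 V} {L : List (Sym2 V)} (hL : IsWbwWalk R (e :: L))
    (hne : L ≠ []) : IsWbwWalk R L :=
  ⟨hne, hL.2.1.of_cons, fun g hg => hL.2.2.1 g (List.mem_cons_of_mem e hg), hL.2.2.2.tail⟩

theorem IsWbwWalk.medial_edist_add_one_le_length {L : List (Sym2 V)} (hL : IsWbwWalk R L)
    {e f : {e : Sym2 V // e ∈ R.G.edgeSet}} (he : L.head? = some e.1)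
    (hf : L.getLast? = some f.1) : (medial R).edist e f + 1 ≤ L.length := by
  induction L generalizing e with
  | nil => exact absurd rfl hL.1
  | cons a t ih =>
    obtain rfl : a = e.1 := Option.some_injective _ he
    cases t with
    | nil =>
      obtain rfl : e = f := Subtype.ext (Option.some_injective _ hf)
      simp
    | cons b t =>
      let e' : {e : Sym2 V // e ∈ R.G.edgeSet} := ⟨b, hL.2.2.1 b (by simp)⟩
      have hadj : (medial R).Adj e e' := medial_adj_iff.mpr
        ⟨fun h => (List.nodup_cons.mp hL.2.1).1 (congrArg Subtype.val h ▸ List.mem_cons_self),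
          (List.isChain_cons_cons.mp hL.2.2.2).1⟩
      have htail : (medial R).edist e' f + 1 ≤ (b :: t).length :=
        ih (hL.of_cons (List.cons_ne_nil b t)) rfl (by rwa [List.getLast?_cons_cons] at hf)
      calc (medial R).edist e f + 1 ≤ (medial R).edist e e' + (medial R).edist e' f + 1 := by
            gcongr; exact SimpleGraph.edist_triangle
        _ = 1 + ((medial R).edist e' f + 1) := by
            rw [SimpleGraph.edist_eq_one_iff_adj.mpr hadj]; ring
        _ ≤ 1 + ((b :: t).length : ℕ∞) := by gcongr
        _ = ((e.1 :: b :: t).length : ℕ∞) := by simp [add_comm]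

theorem _root_.SimpleGraph.Walk.IsPath.isWbwWalk_map_val_support
    {e f : {e : Sym2 V // e ∈ R.G.edgeSet}} {p : (medial R).Walk e f} (hp : p.IsPath) :
    IsWbwWalk R (p.support.map Subtype.val) := by
  refine ⟨?_, hp.support_nodup.map Subtype.val_injective, ?_, ?_⟩
  · exact fun h => p.support_ne_nil (List.map_eq_nil_iff.mp h)
  · simp only [List.mem_map]
    rintro _ ⟨g, -, rfl⟩
    exact g.2
  · exact List.isChain_map_of_isChain (R := (medial R).Adj) _
      (fun _ _ h => (medial_adj_iff.mp h).2) p.isChain_adj_support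

theorem wbwDist_le_one_add_medial_edist {x y : V} {e f : {e : Sym2 V // e ∈ R.G.edgeSet}}
    (hx : x ∈ e.1) (hy : y ∈ f.1) : wbwDist R x y ≤ 1 + (medial R).edist e f := by
  classical
  rcases eq_or_ne ((medial R).edist e f) ⊤ with htop | htop
  · simp [htop]
  obtain ⟨p, hp⟩ := SimpleGraph.exists_walk_of_edist_ne_top htop
  have hwalk : IsWbwWalkFromTo R x y (p.bypass.support.map Subtype.val) := by
    refine ⟨p.bypass_isPath.isWbwWalk_map_val_support, ⟨e.1, ?_, hx⟩, ⟨f.1, ?_, hy⟩⟩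
    · rw [List.head?_map, List.head?_eq_some_head p.bypass.support_ne_nil, p.bypass.head_support]
      rfl
    · rw [List.getLast?_map, List.getLast?_eq_some_getLast p.bypass.support_ne_nil,
        p.bypass.getLast_support]
      rfl
  calc wbwDist R x y ≤ (p.bypass.support.map Subtype.val).length := sInf_le ⟨_, hwalk, rfl⟩
    _ = 1 + (p.bypass.length : ℕ∞) := by simp [add_comm]
    _ ≤ 1 + (p.length : ℕ∞) := by gcongr; exact p.length_bypass_le_length
    _ = 1 + (medial R).edist e f := by rw [hp]

end WBW

theorem observation_medial_general (V : Type) (R : WBW.RotationSystem V) (x y : V) :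
    WBW.wbwDist R x y =
      1 + sInf {d : ℕ∞ | ∃ e f : {e : Sym2 V // e ∈ R.G.edgeSet},
        x ∈ e.1 ∧ y ∈ f.1 ∧ (WBW.medial R).edist e f = d} := by
  apply le_antisymm
  · rw [ENat.add_sInf]
    exact le_iInf₂ fun d ⟨e, f, hx, hy, hd⟩ => hd ▸ WBW.wbwDist_le_one_add_medial_edist hx hy
  · refine le_sInf fun n ⟨L, ⟨hL, ⟨e, he, hx⟩, ⟨f, hf, hy⟩⟩, hn⟩ => ?_
    have he' : e ∈ R.G.edgeSet := hL.2.2.1 e (List.mem_of_mem_head? he)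
    have hf' : f ∈ R.G.edgeSet := hL.2.2.1 f (List.mem_of_mem_getLast? hf)
    calc 1 + _ ≤ 1 + (WBW.medial R).edist ⟨e, he'⟩ ⟨f, hf'⟩ := by
          gcongr; exact sInf_le ⟨_, _, hx, hy, rfl⟩
      _ = (WBW.medial R).edist ⟨e, he'⟩ ⟨f, hf'⟩ + 1 := add_comm _ _
      _ ≤ n := hn ▸ hL.medial_edist_add_one_le_length he hf

/-- Observation 1: in a plane graph `G` with at least one edge, the
wall-by-wall distance between vertices `x` and `y` is one more than the minimum
distance in the medial graph `M_G` between a vertex on the boundary of the face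
`f_x` corresponding to `x` (i.e. an edge of `G` incident to `x`) and a vertex on
the boundary of the face `f_y` corresponding to `y`. -/
theorem observation_medial (V : Type) [Finite V] (R : WBW.RotationSystem V)
    (hplane : R.IsPlane) (hne : R.G.edgeSet.Nonempty) (x y : V) :
    WBW.wbwDist R x y =
      1 + sInf {d : ℕ∞ | ∃ e f : {e : Sym2 V // e ∈ R.G.edgeSet},
        x ∈ e.1 ∧ y ∈ f.1 ∧ (WBW.medial R).edist e f = d} :=
  observation_medial_general V R x y
end

section
/- Let H_Δ be an n-vertex 3-connected triangulated plane graph and λ a positive integer, and consider the drawing of H_Δ^λ in which every new edge (an edge of H_Δ^λ not in H_Δ) joining x, y with a shortest (x,y)-wbw-path e₁,…,e_ℓ (ℓ ≤ λ) is drawn through the ℓ−1 faces f₁,…,f_{ℓ−1} determined by consecutive edge pairs of this path, crossing e₂,…,e_{ℓ−1}. In this drawing, every old edge (an edge of H_Δ) is crossed by at most (λ−3)·2^{λ−2} + 1 new edges. -/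
/-!
A shortest wall-by-wall path never contains two attached edges at distance two, while any two
sides of a triangular face are attached. Hence a shortest path through an old edge `e` enters it
from one of its two faces and leaves into the other, and afterwards it leaves every triangle it
enters through one of the two sides it did not come in through. The part of the path after `e`
is thus a bit string, and its end `y` is the apex of the last triangle, so `y` is determined by
all bits but the last; symmetrically for `x`. A new edge crossing `e`, drawn along a path of
length `ℓ ≤ λ`, is therefore determined by two bit strings of total length `ℓ - 3 ≤ λ - 3`, and
there are `∑_{n ≤ λ - 3} (n + 1) 2^n = (λ - 3) 2^(λ - 2) + 1` such pairs.
-/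

theorem SimpleGraph.exists_dart_edge_eq {V : Type*} {G : SimpleGraph V} {e : Sym2 V}
    (he : e ∈ G.edgeSet) : ∃ d : G.Dart, d.edge = e := by
  induction e using Sym2.ind with
  | _ a b => exact ⟨⟨(a, b), he⟩, rfl⟩

theorem List.exists_eq_append_cons_cons_cons_of_mem_dropLast_drop_one {α : Type*}
    {L : List α} {a : α} (h : a ∈ (L.drop 1).dropLast) :
    ∃ pre b c post, L = pre ++ b :: a :: c :: post := by
  obtain _ | ⟨b, L⟩ := L
  · simp at h
  have hL : L ≠ [] := by rintro rfl; simp at h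
  obtain ⟨s, t, hst⟩ := List.append_of_mem (by simpa using h)
  obtain ⟨c, post, hpost⟩ := List.exists_cons_of_ne_nil (List.concat_ne_nil (L.getLast hL) t)
  obtain ⟨pre, b', hpre⟩ : ∃ pre b', b :: s = pre ++ [b'] :=
    ⟨_, _, (List.dropLast_append_getLast (List.cons_ne_nil b s)).symm⟩
  refine ⟨pre, b', c, post, ?_⟩
  calc b :: L = (b :: s) ++ a :: (t ++ [L.getLast hL]) := by
        conv_lhs => rw [← List.dropLast_append_getLast hL, hst]
        simp
    _ = pre ++ b' :: a :: c :: post := by rw [hpre, hpost]; simp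

theorem sum_range_succ_mul_two_pow (m : ℕ) :
    ∑ n ∈ Finset.range (m + 1), (n + 1) * 2 ^ n = m * 2 ^ (m + 1) + 1 := by
  induction m with
  | zero => simp
  | succ m ih => rw [Finset.sum_range_succ, ih]; ring

theorem Set.ncard_le_of_forall_eq_bitPair {α : Type*} {S : Set α}
    (f : List Bool → List Bool → α) {m : ℕ}
    (hS : ∀ a ∈ S, ∃ s t : List Bool, s.length + t.length ≤ m ∧ a = f s t) :
    S.ncard ≤ m * 2 ^ (m + 1) + 1 := by
  let F : (Σ n : Fin (m + 1), Fin (n + 1) × List.Vector Bool n) → α :=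
    fun z => f (z.2.2.toList.take z.2.1) (z.2.2.toList.drop z.2.1)
  have hsub : S ⊆ Set.range F := by
    intro a ha
    obtain ⟨s, t, hst, rfl⟩ := hS a ha
    refine ⟨⟨⟨s.length + t.length, by omega⟩, ⟨s.length, ?_⟩, ⟨s ++ t, by simp⟩⟩, by simp [F]⟩
    exact Nat.lt_succ_of_le (Nat.le_add_right _ _)
  calc S.ncard ≤ (Set.range F).ncard := Set.ncard_le_ncard hsub (Set.finite_range F)
    _ ≤ Nat.card (Σ n : Fin (m + 1), Fin (n + 1) × List.Vector Bool n) := by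
      rw [← Nat.card_coe_set_eq]; exact Finite.card_range_le F
    _ = ∑ n ∈ Finset.range (m + 1), (n + 1) * 2 ^ n := by
      simp [Nat.card_eq_fintype_card, Fintype.card_sigma, card_vector,
        Fin.sum_univ_eq_sum_range (fun n => (n + 1) * 2 ^ n)]
    _ = m * 2 ^ (m + 1) + 1 := sum_range_succ_mul_two_pow m

namespace WBW

variable {V : Type*} {R : RotationSystem V}

theorem faceNext_edge (d : R.G.Dart) : (R.faceNext d).edge = R.rot d.toProd.2 d.edge :=
  Sym2.other_spec _

theorem attached_edge_faceNext (d : R.G.Dart) : Attached R d.edge (R.faceNext d).edge :=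
  ⟨d.toProd.2, ⟨d.edge_mem, Sym2.mem_mk_right _ _⟩,
    ⟨(R.faceNext d).edge_mem, Sym2.mem_mk_left _ _⟩, Or.inl (faceNext_edge d).symm⟩

/-- `g` is one of the two sides other than `d.edge` of the (triangular) face traced from `d`. -/
def FaceSide (R : RotationSystem V) (d : R.G.Dart) (g : Sym2 V) : Prop :=
  g = (R.faceNext d).edge ∨ g = (R.faceNext (R.faceNext d)).edge

theorem FaceSide.attached {d : R.G.Dart} {g g' : Sym2 V} (hg : FaceSide R d g)
    (hg' : FaceSide R d g') (hne : g ≠ g') : Attached R g g' := by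
  rcases hg with rfl | rfl <;> rcases hg' with rfl | rfl
  · exact absurd rfl hne
  · exact attached_edge_faceNext _
  · exact (attached_edge_faceNext _).symm
  · exact absurd rfl hne

/-- Leave the face traced from `d` through its second (`true`) or third (`false`) side,
oriented so that the next face is the one traced from the result. -/
noncomputable def RotationSystem.cross (R : RotationSystem V) (d : R.G.Dart) :
    Bool → R.G.Dart
  | true => (R.faceNext d).symm
  | false => (R.faceNext (R.faceNext d)).symm

theorem FaceSide.exists_eq_cross {d : R.G.Dart} {g : Sym2 V} (h : FaceSide R d g) :
    ∃ b, g = (R.cross d b).edge := by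
  rcases h with rfl | rfl
  · exact ⟨true, (SimpleGraph.Dart.edge_symm _).symm⟩
  · exact ⟨false, (SimpleGraph.Dart.edge_symm _).symm⟩

namespace RotationSystem.Triangulated

variable (htri : R.Triangulated)
include htri

theorem faceNext_faceNext_snd (d : R.G.Dart) :
    (R.faceNext (R.faceNext d)).toProd.2 = d.toProd.1 :=
  congrArg (fun p : R.G.Dart => p.toProd.1) (htri d).1

theorem faceSide_symm_cross (d : R.G.Dart) (b : Bool) :
    FaceSide R (R.cross d b).symm d.edge := by
  cases b
  · left
    simp only [RotationSystem.cross, SimpleGraph.Dart.symm_symm, (htri d).1]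
  · right
    simp only [RotationSystem.cross, SimpleGraph.Dart.symm_symm, (htri d).1]

theorem eq_edge_faceNext_faceNext {d : R.G.Dart} {g : Sym2 V}
    (hg : g ∈ incidentSet R.G d.toProd.1) (hrot : R.rot d.toProd.1 g = d.edge) :
    g = (R.faceNext (R.faceNext d)).edge := by
  obtain ⟨hgE, hv⟩ := hg
  have hg : s(Sym2.Mem.other hv, d.toProd.1) = g := by
    rw [Sym2.eq_swap]; exact Sym2.other_spec hv
  let q : R.G.Dart := ⟨(Sym2.Mem.other hv, d.toProd.1), by rw [← hg] at hgE; exact hgE⟩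
  have hq : R.faceNext q = d := by
    have hedge : s(d.toProd.1, (R.faceNext q).toProd.2) = s(d.toProd.1, d.toProd.2) := by
      change (R.faceNext q).edge = d.edge
      rw [faceNext_edge, ← hrot, ← hg]
      rfl
    exact SimpleGraph.Dart.ext _ _ (Prod.ext rfl (Sym2.congr_right.1 hedge))
  have hq3 : q = R.faceNext (R.faceNext (R.faceNext q)) := ((htri q).1).symm
  rw [hq] at hq3
  rw [← hg]
  exact congrArg SimpleGraph.Dart.edge hq3

theorem faceSide_of_attached {d : R.G.Dart} {g : Sym2 V} (h : Attached R d.edge g) :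
    FaceSide R d g ∨ FaceSide R d.symm g := by
  obtain ⟨v, ⟨-, hvd⟩, hg, hrot | hrot⟩ := h <;>
    rcases Sym2.mem_iff.1 hvd with rfl | rfl
  · right; left
    rw [faceNext_edge, SimpleGraph.Dart.edge_symm]; exact hrot.symm
  · left; left
    rw [faceNext_edge]; exact hrot.symm
  · left; right
    exact eq_edge_faceNext_faceNext htri hg hrot
  · right; right
    exact eq_edge_faceNext_faceNext htri hg (by rw [SimpleGraph.Dart.edge_symm]; exact hrot)

theorem eq_faceNext_snd {d : R.G.Dart} {c : Sym2 V} {y : V} (hc : FaceSide R d c)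
    (hyc : y ∈ c) (hyd : y ∉ d.edge) : y = (R.faceNext d).toProd.2 := by
  have hy : y ≠ d.toProd.1 ∧ y ≠ d.toProd.2 := by
    simpa [SimpleGraph.Dart.edge, not_or] using hyd
  rcases hc with rfl | rfl
  · rcases Sym2.mem_iff.1 hyc with h | h
    · exact absurd h hy.2
    · exact h
  · rcases Sym2.mem_iff.1 hyc with h | h
    · exact h
    · exact absurd (h.trans (faceNext_faceNext_snd htri d)) hy.1

end RotationSystem.Triangulated

variable {x y : V} {L : List (Sym2 V)}

theorem IsWbwWalk.attached_of_infix {a b : Sym2 V} (h : IsWbwWalk R L) (hab : [a, b] <:+: L) :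
    Attached R a b :=
  List.isChain_pair.1 (h.2.2.2.infix hab)

theorem IsWbwWalk.of_sublist {L' : List (Sym2 V)} (h : IsWbwWalk R L) (hsub : L'.Sublist L)
    (hne : L' ≠ []) (hchain : L'.IsChain (Attached R)) : IsWbwWalk R L' :=
  ⟨hne, hsub.nodup h.2.1, fun e he => h.2.2.1 e (hsub.subset he), hchain⟩

theorem IsWbwWalkFromTo.reverse (h : IsWbwWalkFromTo R x y L) :
    IsWbwWalkFromTo R y x L.reverse := by
  obtain ⟨⟨hne, hnd, hE, hch⟩, hx, hy⟩ := h
  refine ⟨⟨by simpa using hne, List.nodup_reverse.2 hnd, fun e he => hE e (List.mem_reverse.1 he),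
    List.isChain_reverse.2 (hch.imp fun _ _ h => h.symm)⟩, ?_, ?_⟩
  · simpa using hy
  · simpa using hx

theorem wbwDist_comm (x y : V) : wbwDist R x y = wbwDist R y x := by
  suffices h : ∀ x y, wbwDist R x y ≤ wbwDist R y x from le_antisymm (h x y) (h y x)
  intro x y
  refine le_sInf ?_
  rintro _ ⟨L, hL, rfl⟩
  exact sInf_le ⟨L.reverse, hL.reverse, by simp⟩

theorem wbwDist_le_of_power_adj {l : ℕ} (h : (R.power l).Adj x y) (hG : ¬ R.G.Adj x y) :
    wbwDist R x y ≤ l := by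
  simp only [RotationSystem.power, SimpleGraph.sup_adj, SimpleGraph.fromRel_adj] at h
  rcases h with h | ⟨-, h | h⟩
  · exact absurd h hG
  · exact h
  · rwa [wbwDist_comm]

def IsShortestWbwWalk (R : RotationSystem V) (x y : V) (L : List (Sym2 V)) : Prop :=
  IsWbwWalkFromTo R x y L ∧ ∀ L', IsWbwWalkFromTo R x y L' → L.length ≤ L'.length

theorem IsWbwWalkFromTo.isShortest_of_length_eq (h : IsWbwWalkFromTo R x y L)
    (hlen : (L.length : ℕ∞) = wbwDist R x y) : IsShortestWbwWalk R x y L :=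
  ⟨h, fun L' h' => by
    have : wbwDist R x y ≤ L'.length := sInf_le ⟨L', h', rfl⟩
    rw [← hlen] at this
    exact_mod_cast this⟩

namespace IsShortestWbwWalk

theorem reverse (h : IsShortestWbwWalk R x y L) : IsShortestWbwWalk R y x L.reverse :=
  ⟨h.1.reverse, fun L' h' => by simpa using h.2 _ h'.reverse⟩

theorem not_attached {pre post : List (Sym2 V)} {a b c : Sym2 V}
    (h : IsShortestWbwWalk R x y (pre ++ a :: b :: c :: post)) : ¬ Attached R a c := by
  intro hac
  obtain ⟨⟨hwalk, hx, hy⟩, hmin⟩ := h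
  have hchain : (pre ++ a :: c :: post).IsChain (Attached R) := by
    have : (pre ++ a :: b :: c :: post).IsChain (Attached R) := hwalk.2.2.2
    simp only [List.isChain_append, List.isChain_cons_cons] at this ⊢
    tauto
  have hshort : IsWbwWalkFromTo R x y (pre ++ a :: c :: post) :=
    ⟨hwalk.of_sublist (by simp) (by simp) hchain, by simpa [List.head?_append] using hx,
      by simpa [List.getLast?_append] using hy⟩
  simpa using hmin _ hshort

theorem notMem_penultimate {pre : List (Sym2 V)} {b c : Sym2 V}
    (h : IsShortestWbwWalk R x y (pre ++ [b, c])) : y ∉ b := by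
  intro hyb
  obtain ⟨⟨hwalk, hx, -⟩, hmin⟩ := h
  have hshort : IsWbwWalkFromTo R x y (pre ++ [b]) :=
    ⟨hwalk.of_sublist (by simp) (by simp) (hwalk.2.2.2.prefix ⟨[c], by simp⟩),
      by simpa [List.head?_append] using hx, ⟨b, by simp, hyb⟩⟩
  simpa using hmin _ hshort

theorem faceSide_next (htri : R.Triangulated) {pre post : List (Sym2 V)} {g c : Sym2 V}
    {d : R.G.Dart} (h : IsShortestWbwWalk R x y (pre ++ g :: d.edge :: c :: post))
    (hg : FaceSide R d.symm g) : FaceSide R d c := by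
  have hdc : Attached R d.edge c := h.1.1.attached_of_infix ⟨pre ++ [g], post, by simp⟩
  refine (htri.faceSide_of_attached hdc).resolve_right fun hc => h.not_attached ?_
  refine hg.attached hc ?_
  rintro rfl
  have hnd := h.1.1.2.1
  simp [List.nodup_append] at hnd

theorem exists_eq_faceNext_snd (htri : R.Triangulated) {B pre : List (Sym2 V)} {d : R.G.Dart}
    {c : Sym2 V} (h : IsShortestWbwWalk R x y (pre ++ d.edge :: c :: B))
    (hc : FaceSide R d c) :
    ∃ bits : List Bool, bits.length = B.length ∧
      y = (R.faceNext (bits.foldl R.cross d)).toProd.2 := by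
  induction B generalizing pre d c with
  | nil =>
    obtain ⟨e, he, hye⟩ := h.1.2.2
    obtain rfl : e = c := by simpa using he.symm
    exact ⟨[], rfl, htri.eq_faceNext_snd hc hye h.notMem_penultimate⟩
  | cons c' B ih =>
    obtain ⟨b, rfl⟩ := hc.exists_eq_cross
    have hc' : FaceSide R (R.cross d b) c' := h.faceSide_next htri (htri.faceSide_symm_cross d b)
    obtain ⟨bits, hlen, hy⟩ := ih (pre := pre ++ [d.edge]) (by simpa using h) hc'
    exact ⟨b :: bits, by simp [hlen], hy⟩

theorem exists_bits_of_faceSide (htri : R.Triangulated) {pre post : List (Sym2 V)}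
    {g c : Sym2 V} {d : R.G.Dart} (h : IsShortestWbwWalk R x y (pre ++ g :: d.edge :: c :: post))
    (hc : FaceSide R d c) :
    ∃ s t : List Bool, s.length = pre.length ∧ t.length = post.length ∧
      x = (R.faceNext (s.foldl R.cross d.symm)).toProd.2 ∧
      y = (R.faceNext (t.foldl R.cross d)).toProd.2 := by
  have hrev : IsShortestWbwWalk R y x (post.reverse ++ c :: d.symm.edge :: g :: pre.reverse) := by
    simpa using h.reverse
  have hg : FaceSide R d.symm g := hrev.faceSide_next htri (by rwa [SimpleGraph.Dart.symm_symm])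
  obtain ⟨s, hs, hx⟩ := exists_eq_faceNext_snd htri (pre := post.reverse ++ [c])
    (by simpa using hrev) hg
  obtain ⟨t, ht, hy⟩ := exists_eq_faceNext_snd htri (pre := pre ++ [g]) (by simpa using h) hc
  exact ⟨s, t, by simpa using hs, ht, hx, hy⟩

theorem exists_bits (htri : R.Triangulated) (h : IsShortestWbwWalk R x y L) {d : R.G.Dart}
    (hd : d.edge ∈ (L.drop 1).dropLast) :
    ∃ s t : List Bool, s.length + t.length + 3 = L.length ∧
      s(x, y) = s((R.faceNext (s.foldl R.cross d.symm)).toProd.2,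
        (R.faceNext (t.foldl R.cross d)).toProd.2) := by
  obtain ⟨pre, g, c, post, rfl⟩ :=
    List.exists_eq_append_cons_cons_cons_of_mem_dropLast_drop_one hd
  have hdc : Attached R d.edge c := h.1.1.attached_of_infix ⟨pre ++ [g], post, by simp⟩
  rcases htri.faceSide_of_attached hdc with hc | hc
  · obtain ⟨s, t, hs, ht, hx, hy⟩ := h.exists_bits_of_faceSide htri hc
    exact ⟨s, t, by simp only [List.length_append, List.length_cons, hs, ht]; omega,
      by rw [hx, hy]⟩
  · have h' : IsShortestWbwWalk R x y (pre ++ g :: d.symm.edge :: c :: post) := by simpa using h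
    obtain ⟨s, t, hs, ht, hx, hy⟩ := h'.exists_bits_of_faceSide htri hc
    rw [SimpleGraph.Dart.symm_symm] at hx
    exact ⟨t, s, by simp only [List.length_append, List.length_cons, hs, ht]; omega,
      by rw [hx, hy, Sym2.eq_swap]⟩

end IsShortestWbwWalk

end WBW

theorem old_edge_crossing_bound_general (V : Type) (R : WBW.RotationSystem V)
    (htri : R.Triangulated)
    (l : ℕ) (P : V → V → List (Sym2 V))
    (hP : ∀ x y, (R.power l).Adj x y → ¬ R.G.Adj x y →
      WBW.IsWbwWalkFromTo R x y (P x y) ∧ ((P x y).length : ℕ∞) = WBW.wbwDist R x y)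
    (e : Sym2 V) (he : e ∈ R.G.edgeSet) :
    Set.ncard {q : Sym2 V | q ∈ (R.power l).edgeSet ∧ q ∉ R.G.edgeSet ∧
        ∃ x y, q = s(x, y) ∧ e ∈ ((P x y).drop 1).dropLast} ≤
      (l - 3) * 2 ^ (l - 2) + 1 := by
  obtain ⟨d, rfl⟩ := SimpleGraph.exists_dart_edge_eq he
  have hpow : (l - 3) * 2 ^ (l - 3 + 1) ≤ (l - 3) * 2 ^ (l - 2) := by
    rcases Nat.lt_or_ge l 3 with hl | hl
    · simp [Nat.sub_eq_zero_of_le hl.le]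
    · rw [show l - 3 + 1 = l - 2 by omega]
  refine (Set.ncard_le_of_forall_eq_bitPair (m := l - 3) (fun s t =>
    s((R.faceNext (s.foldl R.cross d.symm)).toProd.2,
      (R.faceNext (t.foldl R.cross d)).toProd.2)) ?_).trans (by omega)
  rintro _ ⟨hq, hqG, x, y, rfl, hd⟩
  obtain ⟨hwalk, hlen⟩ := hP x y hq hqG
  obtain ⟨s, t, hst, hxy⟩ := (hwalk.isShortest_of_length_eq hlen).exists_bits htri hd
  have hle : (P x y).length ≤ l := by
    have := WBW.wbwDist_le_of_power_adj hq hqG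
    rw [← hlen] at this
    exact_mod_cast this
  exact ⟨s, t, by omega, hxy⟩

/-- from the proof of Lemma 3: in the drawing of `H_Δ^λ` in which
every new edge `{x,y}` is drawn along a chosen shortest `(x,y)`-wbw-path, crossing
exactly the interior edges `e₂, …, e_{ℓ-1}` of that path, every old edge is crossed
by at most `(λ−3)·2^{λ−2} + 1` new edges. -/
theorem old_edge_crossing_bound (V : Type) [Finite V] (R : WBW.RotationSystem V)
    (hplane : R.IsPlane) (h3 : WBW.ThreeConnected R.G) (htri : R.Triangulated)
    (l : ℕ) (hl : 0 < l) (P : V → V → List (Sym2 V))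
    (hP : ∀ x y, (R.power l).Adj x y → ¬ R.G.Adj x y →
      WBW.IsWbwWalkFromTo R x y (P x y) ∧ ((P x y).length : ℕ∞) = WBW.wbwDist R x y)
    (hPsymm : ∀ x y, P y x = (P x y).reverse)
    (e : Sym2 V) (he : e ∈ R.G.edgeSet) :
    Set.ncard {q : Sym2 V | q ∈ (R.power l).edgeSet ∧ q ∉ R.G.edgeSet ∧
        ∃ x y, q = s(x, y) ∧ e ∈ ((P x y).drop 1).dropLast} ≤
      (l - 3) * 2 ^ (l - 2) + 1 :=
  old_edge_crossing_bound_general V R htri l P hP e he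
end
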